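/- Let K ≥ 1, let a ∈ ℝ^K, let y ∈ {0,1}, and set H = (1/K)·Σ_{j=1}^K φ(a_j). Then 0 < H < 1, and the following bounds on the gradient and Hessian coefficients of the cross-entropy loss hold: (i) for every j, |(1/K)·(y − H)/(H·(1 − H))·φ'(a_j)| ≤ 1; (ii) for every j ≠ l, |(1/K²)·φ'(a_j)·φ'(a_l)·(H² + y − 2yH)/(H²·(1 − H)²)| ≤ 1; (iii) for every j, |(1/K²)·φ'(a_j)²·(H² + y − 2yH)/(H²·(1 − H)²) − (1/K)·φ''(a_j)·(y − H)/(H·(1 − H))| ≤ 2. -/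

import Mathlib

/-!
Write `q_j = φ'(a_j)/K` and `g = (y − H)/(H(1 − H))`. Since `φ' = φ(1 − φ)` is at most both `φ`
and `1 − φ`, and a single term `φ(a_j)/K` (resp. `(1 − φ(a_j))/K`) of the average `H` (resp.
`1 − H`) is at most the average, `q_j ≤ min(H, 1 − H)`. As `|g|` is `1/H` for `y = 1` and
`1/(1 − H)` for `y = 0`, this gives `|q_j g| ≤ 1`. Because `y² = y`, the Hessian coefficient
`(H² + y − 2yH)/(H²(1 − H)²)` is `g²`, so the three quantities are `q_j g`, `(q_j g)(q_l g)` and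
`(q_j g)² − (φ''(a_j)/K) g`, and `|φ''| ≤ φ'` bounds the last term like the first.
-/

/-- The sigmoid function `φ(x) = 1/(1 + exp(−x))`. -/
noncomputable def phi (x : ℝ) : ℝ := 1 / (1 + Real.exp (-x))

/-- The first derivative of the sigmoid, `φ' = φ(1−φ)`. -/
noncomputable def phi' (x : ℝ) : ℝ := phi x * (1 - phi x)

/-- The second derivative of the sigmoid, `φ'' = φ(1−φ)(1−2φ)`. -/
noncomputable def phi'' (x : ℝ) : ℝ := phi x * (1 - phi x) * (1 - 2 * phi x)

section Mean

variable {ι : Type*} [Fintype ι]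

lemma one_sub_mean_eq [Nonempty ι] (f : ι → ℝ) :
    1 - 1 / (Fintype.card ι : ℝ) * ∑ i, f i = 1 / (Fintype.card ι : ℝ) * ∑ i, (1 - f i) := by
  have hcard : (Fintype.card ι : ℝ) ≠ 0 := by positivity
  rw [Finset.sum_sub_distrib, Finset.sum_const, Finset.card_univ, nsmul_eq_mul, mul_one]
  field_simp

lemma mean_pos [Nonempty ι] {f : ι → ℝ} (hf : ∀ i, 0 < f i) :
    0 < 1 / (Fintype.card ι : ℝ) * ∑ i, f i :=
  mul_pos (by positivity) (Finset.sum_pos (fun i _ => hf i) Finset.univ_nonempty)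

lemma mean_lt_one [Nonempty ι] {f : ι → ℝ} (hf : ∀ i, f i < 1) :
    1 / (Fintype.card ι : ℝ) * ∑ i, f i < 1 := by
  have := mean_pos (f := fun i => 1 - f i) (fun i => sub_pos.mpr (hf i))
  rw [← one_sub_mean_eq] at this
  linarith

lemma le_mean_of_le {f : ι → ℝ} (hf : ∀ i, 0 ≤ f i) {b : ℝ} {j : ι} (hb : b ≤ f j) :
    1 / (Fintype.card ι : ℝ) * b ≤ 1 / (Fintype.card ι : ℝ) * ∑ i, f i :=
  mul_le_mul_of_nonneg_left
    (hb.trans (Finset.single_le_sum (fun i _ => hf i) (Finset.mem_univ j))) (by positivity)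

lemma le_one_sub_mean_of_le [Nonempty ι] {f : ι → ℝ} (hf : ∀ i, f i ≤ 1) {b : ℝ} {j : ι}
    (hb : b ≤ 1 - f j) :
    1 / (Fintype.card ι : ℝ) * b ≤ 1 - 1 / (Fintype.card ι : ℝ) * ∑ i, f i := by
  rw [one_sub_mean_eq]
  exact le_mean_of_le (f := fun i => 1 - f i) (fun i => sub_nonneg.mpr (hf i)) hb

end Mean

section Sigmoid

lemma phi_pos (x : ℝ) : 0 < phi x := by
  unfold phi
  positivity

lemma phi_lt_one (x : ℝ) : phi x < 1 := by
  unfold phi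
  rw [div_lt_one (by positivity)]
  linarith [Real.exp_pos (-x)]

lemma phi'_pos (x : ℝ) : 0 < phi' x :=
  mul_pos (phi_pos x) (sub_pos.mpr (phi_lt_one x))

lemma phi'_le_phi (x : ℝ) : phi' x ≤ phi x :=
  mul_le_of_le_one_right (phi_pos x).le (by linarith [phi_pos x])

lemma phi'_le_one_sub_phi (x : ℝ) : phi' x ≤ 1 - phi x :=
  mul_le_of_le_one_left (sub_pos.mpr (phi_lt_one x)).le (phi_lt_one x).le

lemma abs_phi''_le_phi' (x : ℝ) : |phi'' x| ≤ phi' x := by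
  have hphi'' : phi'' x = phi' x * (1 - 2 * phi x) := rfl
  rw [hphi'', abs_mul, abs_of_pos (phi'_pos x)]
  refine mul_le_of_le_one_right (phi'_pos x).le (abs_le.mpr ⟨?_, ?_⟩) <;>
    linarith [phi_pos x, phi_lt_one x]

lemma abs_div_card_le_mean_phi {ι : Type*} [Fintype ι] [Nonempty ι] (a : ι → ℝ) {c : ℝ} {j : ι}
    (hc : |c| ≤ phi' (a j)) :
    |1 / (Fintype.card ι : ℝ) * c| ≤ 1 / (Fintype.card ι : ℝ) * ∑ i, phi (a i) ∧
      |1 / (Fintype.card ι : ℝ) * c| ≤ 1 - 1 / (Fintype.card ι : ℝ) * ∑ i, phi (a i) := by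
  rw [abs_mul, abs_of_pos (by positivity : (0 : ℝ) < 1 / (Fintype.card ι : ℝ))]
  exact ⟨le_mean_of_le (fun i => (phi_pos (a i)).le) (hc.trans (phi'_le_phi (a j))),
    le_one_sub_mean_of_le (fun i => (phi_lt_one (a i)).le) (hc.trans (phi'_le_one_sub_phi (a j)))⟩

end Sigmoid

section CrossEntropy

variable {y H : ℝ}

lemma hessian_coeff_eq_sq (hy : y = 0 ∨ y = 1) :
    (H ^ 2 + y - 2 * y * H) / (H ^ 2 * (1 - H) ^ 2) = ((y - H) / (H * (1 - H))) ^ 2 := by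
  rcases hy with rfl | rfl <;> rw [div_pow, mul_pow] <;> ring

lemma abs_mul_gradient_coeff_le_one (hy : y = 0 ∨ y = 1) (hH₀ : 0 < H) (hH₁ : H < 1) {q : ℝ}
    (hqH : |q| ≤ H) (hq₁ : |q| ≤ 1 - H) :
    |q * ((y - H) / (H * (1 - H)))| ≤ 1 := by
  have h1H : 0 < 1 - H := sub_pos.mpr hH₁
  rcases hy with rfl | rfl
  · rw [show (0 - H) / (H * (1 - H)) = -(1 - H)⁻¹ by field_simp; ring, abs_mul, abs_neg,
      abs_inv, abs_of_pos h1H, ← div_eq_mul_inv, div_le_one h1H]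
    exact hq₁
  · rw [show (1 - H) / (H * (1 - H)) = H⁻¹ by field_simp, abs_mul, abs_inv, abs_of_pos hH₀,
      ← div_eq_mul_inv, div_le_one hH₀]
    exact hqH

end CrossEntropy

theorem stmt_17 (K : ℕ) (hK : 1 ≤ K) (a : Fin K → ℝ) (y : ℝ) (hy : y = 0 ∨ y = 1)
    (H : ℝ) (hH : H = (1 / (K : ℝ)) * ∑ j, phi (a j)) :
    (0 < H ∧ H < 1) ∧
    (∀ j, |(1 / (K : ℝ)) * ((y - H) / (H * (1 - H))) * phi' (a j)| ≤ 1) ∧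
    (∀ j l, j ≠ l → |(1 / (K : ℝ) ^ 2) * phi' (a j) * phi' (a l) *
        ((H ^ 2 + y - 2 * y * H) / (H ^ 2 * (1 - H) ^ 2))| ≤ 1) ∧
    (∀ j, |(1 / (K : ℝ) ^ 2) * phi' (a j) ^ 2 *
          ((H ^ 2 + y - 2 * y * H) / (H ^ 2 * (1 - H) ^ 2)) -
        (1 / (K : ℝ)) * phi'' (a j) * ((y - H) / (H * (1 - H)))| ≤ 2) := by
  have : Nonempty (Fin K) := ⟨⟨0, hK⟩⟩
  have hHK : H = 1 / (Fintype.card (Fin K) : ℝ) * ∑ j, phi (a j) := by rw [Fintype.card_fin, hH]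
  have hH₀ : 0 < H := hHK ▸ mean_pos fun i => phi_pos (a i)
  have hH₁ : H < 1 := hHK ▸ mean_lt_one fun i => phi_lt_one (a i)
  rw [hessian_coeff_eq_sq hy]
  set g := (y - H) / (H * (1 - H))
  have hbound {c : ℝ} {j : Fin K} (hc : |c| ≤ phi' (a j)) : |1 / (K : ℝ) * c * g| ≤ 1 := by
    obtain ⟨hcH, hc₁⟩ := abs_div_card_le_mean_phi a hc
    rw [← hHK, Fintype.card_fin] at hcH hc₁
    exact abs_mul_gradient_coeff_le_one hy hH₀ hH₁ hcH hc₁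
  have hgrad (j : Fin K) : |1 / (K : ℝ) * phi' (a j) * g| ≤ 1 :=
    hbound (abs_of_pos (phi'_pos (a j))).le
  refine ⟨⟨hH₀, hH₁⟩, fun j => ?_, fun j l _ => ?_, fun j => ?_⟩
  · simpa only [mul_right_comm] using hgrad j
  · rw [show 1 / (K : ℝ) ^ 2 * phi' (a j) * phi' (a l) * g ^ 2
        = (1 / (K : ℝ) * phi' (a j) * g) * (1 / (K : ℝ) * phi' (a l) * g) by ring, abs_mul]
    exact mul_le_one₀ (hgrad j) (abs_nonneg _) (hgrad l)
  · calc _ = |(1 / (K : ℝ) * phi' (a j) * g) ^ 2 - 1 / (K : ℝ) * phi'' (a j) * g| := by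
          congr 1; ring
      _ ≤ |1 / (K : ℝ) * phi' (a j) * g| ^ 2 + |1 / (K : ℝ) * phi'' (a j) * g| := by
          rw [← abs_pow]; exact abs_sub _ _
      _ ≤ 1 + 1 :=
          add_le_add (pow_le_one₀ (abs_nonneg _) (hgrad j)) (hbound (abs_phi''_le_phi' (a j)))
      _ = 2 := one_add_one_eq_two
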